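/- Let p, q be relatively prime integers with p, q ≥ 2, let j, k be the unique integers with 1 ≤ j ≤ p−1, 1 ≤ k ≤ q−1, jq − kp = 1, and let r be an integer. The three pairs (p,q), (rp−j, rq−k), ((j−(r+1)p, k−(r+1)q) each consist of coprime integers, and the pair of maximal coordinate-absolute-value-sum among the three is (p,q) if and only if r = 0. -/
import Mathlib


/-- The three constituent-knot parameter pairs of θ(p,q,r) are coprime, and
(p,q) is the pair of maximal coordinate-absolute-value-sum iff r = 0. -/
theorem stmt_14 (p q : ℤ) (hp : 2 ≤ p) (hq : 2 ≤ q) (hpq : IsCoprime p q)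
    (j k : ℤ) (hj1 : 1 ≤ j) (hj2 : j ≤ p - 1) (hk1 : 1 ≤ k) (hk2 : k ≤ q - 1)
    (hbez : j * q - k * p = 1) (r : ℤ) :
    IsCoprime p q ∧ IsCoprime (r * p - j) (r * q - k) ∧
    IsCoprime (j - (r + 1) * p) (k - (r + 1) * q) ∧
    ((|p| + |q| > |r * p - j| + |r * q - k| ∧
      |p| + |q| > |j - (r + 1) * p| + |k - (r + 1) * q|) ↔ r = 0) := by
  have hp0 : (0:ℤ) < p := by linarith
  have hq0 : (0:ℤ) < q := by linarith
  have hap : |p| = p := abs_of_pos hp0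
  have haq : |q| = q := abs_of_pos hq0
  refine ⟨hpq, ⟨-q, p, by linear_combination hbez⟩,
    ⟨q, -p, by linear_combination hbez⟩, ?_, ?_⟩
  · rintro ⟨h1, h2⟩
    by_contra hr
    rcases lt_or_gt_of_ne hr with hneg | hpos
    · -- r ≤ -1 : first inequality fails
      have hr1 : r ≤ -1 := by omega
      have hrp : r * p ≤ -p := by nlinarith
      have hrq : r * q ≤ -q := by nlinarith
      have e1 : |r * p - j| = j - r * p := by
        rw [abs_of_nonpos (by linarith)]; ring
      have e2 : |r * q - k| = k - r * q := by
        rw [abs_of_nonpos (by linarith)]; ring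
      rw [hap, haq, e1, e2] at h1
      linarith
    · -- r ≥ 1 : second inequality fails
      have hr1 : 1 ≤ r := by omega
      have hrp : 2 * p ≤ (r + 1) * p := by nlinarith
      have hrq : 2 * q ≤ (r + 1) * q := by nlinarith
      have e1 : |j - (r + 1) * p| = (r + 1) * p - j := by
        rw [abs_of_nonpos (by linarith)]; ring
      have e2 : |k - (r + 1) * q| = (r + 1) * q - k := by
        rw [abs_of_nonpos (by linarith)]; ring
      rw [hap, haq, e1, e2] at h2
      linarith
  · rintro rfl
    have e1 : |(0:ℤ) * p - j| = j := by
      rw [abs_of_nonpos (by linarith)]; ring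
    have e2 : |(0:ℤ) * q - k| = k := by
      rw [abs_of_nonpos (by linarith)]; ring
    have e3 : |j - ((0:ℤ) + 1) * p| = p - j := by
      rw [abs_of_nonpos (by linarith)]; ring
    have e4 : |k - ((0:ℤ) + 1) * q| = q - k := by
      rw [abs_of_nonpos (by linarith)]; ring
    rw [hap, haq, e1, e2, e3, e4]
    constructor <;> linarith
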